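/- If ξ ⟾_T ζ (ζ is obtained from ξ by a finite, possibly empty, sequence of one-step productions of the tag system T), then for all A ∈ ͞ξ and B ∈ ͞ζ one has P_T ⊢ A ⇒ B: there exist formulas C₀ = A, C₁, …, C_n = B (n ≥ 0) with P_T ⊢ C_i → C_{i+1} for all 0 ≤ i ≤ n−1. -/
import Mathlib


namespace PC

/-- `{→}`-formulas over a countably infinite set of propositional variables. -/
inductive Fml : Type where
  | var : ℕ → Fml
  | imp : Fml → Fml → Fml
deriving DecidableEq

namespace Fml

/-- Application of a substitution to a formula. -/
def subst (σ : ℕ → Fml) : Fml → Fml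
  | var n => σ n
  | imp A B => imp (subst σ A) (subst σ B)

/-- The set of variables of a formula. -/
def fvars : Fml → Finset ℕ
  | var n => {n}
  | imp A B => fvars A ∪ fvars B

/-- Derivability from a set of axioms by modus ponens and substitution. -/
inductive Deriv (P : Set Fml) : Fml → Prop
  | ax {A : Fml} : A ∈ P → Deriv P A
  | mp {A B : Fml} : Deriv P A → Deriv P (imp A B) → Deriv P B
  | sub {A : Fml} (σ : ℕ → Fml) : Deriv P A → Deriv P (subst σ A)

end Fml

/-- `B̂`: the result of substituting `B` for the variable `x` (= `var 0`) in `x̂`. -/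
def hat (xhat B : Fml) : Fml := Fml.subst (fun n => if n = 0 then B else Fml.var n) xhat

/-- `A ∘ B := ((B̂ → B̂) → B̂) → (Â → ((B̂ → B̂) → B̂))`. -/
def circ (xhat A B : Fml) : Fml :=
  .imp (.imp (.imp (hat xhat B) (hat xhat B)) (hat xhat B))
    (.imp (hat xhat A) (.imp (.imp (hat xhat B) (hat xhat B)) (hat xhat B)))

/-- `A · B := ((A → A) → A) ∘ B`. -/
def dot (xhat A B : Fml) : Fml := circ xhat (.imp (.imp A A) A) B

/-- `Cform i` is the formula `p → (p → … (p → p))` with `i` antecedents `p`,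
where `p := var 0`. -/
def Cform : ℕ → Fml
  | 0 => .var 0
  | n + 1 => .imp (.var 0) (Cform n)

/-- The code of the letter `aᵢ` (letters of the alphabet `𝒜 = {a₁, …, a_m}` are the
elements of `Fin m`, the letter `a : Fin m` standing for `a_{a+1}`): `Cᵢ ∘ p`. -/
def letterCode (xhat : Fml) {m : ℕ} (a : Fin m) : Fml :=
  circ xhat (Cform (a.val + 1)) (.var 0)

/-- Formal alphabetic-formula trees over the alphabet `Fin m`. -/
inductive ATree (m : ℕ) : Type where
  | leaf : Fin m → ATree m
  | node : ATree m → ATree m → ATree m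

/-- The word associated with an alphabetic formula. -/
def ATree.word {m : ℕ} : ATree m → List (Fin m)
  | .leaf a => [a]
  | .node l r => l.word ++ r.word

/-- The `{→}`-formula denoted by an alphabetic-formula tree. -/
def ATree.toFml {m : ℕ} (xhat : Fml) : ATree m → Fml
  | .leaf a => letterCode xhat a
  | .node l r => dot xhat (l.toFml xhat) (r.toFml xhat)

/-- `A` is an alphabetic formula (an `𝒜`-formula). -/
def IsAForm (m : ℕ) (xhat : Fml) (A : Fml) : Prop := ∃ t : ATree m, t.toFml xhat = A

/-- The code `͞α` of a word `α`: the set of all `𝒜`-formulas `A` with `word(A) = α`. -/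
def codeSet {m : ℕ} (xhat : Fml) (α : List (Fin m)) : Set Fml :=
  { A | ∃ t : ATree m, t.word = α ∧ t.toFml xhat = A }

/-- `A*`: the set of substitution instances of `A`. -/
def Inst (A : Fml) : Set Fml := { B | ∃ σ, Fml.subst σ A = B }

/-- `M*`: the set of substitution instances of members of `M`. -/
def InstSet (M : Set Fml) : Set Fml := { B | ∃ A ∈ M, ∃ σ, Fml.subst σ A = B }

/-- A tag system over the alphabet `Fin m`: the words `ω₁, …, ω_m` and the
deletion number `d`. -/
structure TagSystem (m : ℕ) where
  W : Fin m → List (Fin m)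
  d : ℕ

/-- One-step production: `ξ ↦_T ζ` iff `ξ = aᵢβγ` with `|β| = d − 1` and `ζ = γωᵢ`. -/
def TagStep {m : ℕ} (T : TagSystem m) (ξ ζ : List (Fin m)) : Prop :=
  ∃ (i : Fin m) (β γ : List (Fin m)),
    β.length = T.d - 1 ∧ ξ = i :: (β ++ γ) ∧ ζ = γ ++ T.W i

/-- `ξ ⟾_T ζ`: reflexive-transitive closure of one-step production. -/
def TagProd {m : ℕ} (T : TagSystem m) : List (Fin m) → List (Fin m) → Prop :=
  Relation.ReflTransGen (TagStep T)

/-- `T` halts on `ξ`. -/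
def TagHalts {m : ℕ} (T : TagSystem m) (ξ : List (Fin m)) : Prop :=
  ∃ ζ, TagProd T ξ ζ ∧ ζ.length < T.d

/-- The variables `x, y, z, u` used in the axiom schemes. -/
def Xv : Fml := .var 1
def Yv : Fml := .var 2
def Zv : Fml := .var 3
def Uv : Fml := .var 4

/-- The axioms (R₁)–(R₄). -/
def Raxioms (xhat : Fml) : Set Fml :=
  { .imp (dot xhat Xv (dot xhat Yv Zv)) (dot xhat (dot xhat Xv Yv) Zv),
    .imp (dot xhat (dot xhat Xv Yv) Zv) (dot xhat Xv (dot xhat Yv Zv)),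
    .imp (dot xhat (dot xhat Xv (dot xhat Yv Zv)) Uv)
      (dot xhat (dot xhat (dot xhat Xv Yv) Zv) Uv),
    .imp (dot xhat (dot xhat (dot xhat Xv Yv) Zv) Uv)
      (dot xhat (dot xhat Xv (dot xhat Yv Zv)) Uv) }

/-- The axioms (T₁) and (T₂) of `P_T`. -/
def Taxioms {m : ℕ} (xhat : Fml) (T : TagSystem m) : Set Fml :=
  { F | ∃ (i : Fin m) (α : List (Fin m)) (A B : Fml),
      α.length = T.d - 1 ∧ A ∈ codeSet xhat (i :: α) ∧ B ∈ codeSet xhat (T.W i) ∧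
      (F = .imp (dot xhat A Xv) (dot xhat Xv B) ∨ F = .imp A B) }

/-- The calculus `P_T`. -/
def PT {m : ℕ} (xhat : Fml) (T : TagSystem m) : Set Fml := Taxioms xhat T ∪ Raxioms xhat

/-- `P ⊢ A ⇒ B`: there are `C₀ = A, …, C_n = B` with `P ⊢ Cᵢ → Cᵢ₊₁` for all `i`. -/
def DChain (P : Set Fml) : Fml → Fml → Prop :=
  Relation.ReflTransGen (fun C D => Fml.Deriv P (.imp C D))

/-- `T_α`: the set of `𝒜`-formulas `A` with `α ⟾_T word(A)`. -/
def Tset {m : ℕ} (xhat : Fml) (T : TagSystem m) (α : List (Fin m)) : Set Fml :=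
  { A | ∃ t : ATree m, t.toFml xhat = A ∧ TagProd T α t.word }

/-- The halting-condition axioms (H) for the calculus `P₀`. -/
def Haxioms {m : ℕ} (xhat : Fml) (T : TagSystem m) (P₀ : Finset Fml) : Set Fml :=
  { F | ∃ (α : List (Fin m)) (A B : Fml), α ≠ [] ∧ α.length < T.d ∧
      A ∈ codeSet xhat α ∧ B ∈ P₀ ∧ F = .imp A B }

/-- The calculus `P_{T,P₀}`. -/
def PTP0 {m : ℕ} (xhat : Fml) (T : TagSystem m) (P₀ : Finset Fml) : Set Fml :=
  PT xhat T ∪ Haxioms xhat T P₀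

/-- The calculus `P_{T,P₀,ξ}`. -/
def PTP0xi {m : ℕ} (xhat : Fml) (T : TagSystem m) (P₀ : Finset Fml)
    (ξ : List (Fin m)) : Set Fml :=
  PT xhat T ∪ Haxioms xhat T P₀ ∪ codeSet xhat ξ

/-- `⟨P⟩`: formulas obtained from `P` by one application of modus ponens or
substitution. -/
def stepOnce (P : Set Fml) : Set Fml :=
  { B | ∃ A, A ∈ P ∧ Fml.imp A B ∈ P } ∪ { B | ∃ A ∈ P, ∃ σ, Fml.subst σ A = B }

/-- `⟨P⟩_n`. -/
def stepIter (P : Set Fml) : ℕ → Set Fml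
  | 0 => P
  | n + 1 => stepOnce (stepIter P n)

/-- The single axiom `x → (y → x)`. -/
def Kax : Fml := .imp (.var 0) (.imp (.var 1) (.var 0))

/-- An effective encoding of `{→}`-formulas as natural numbers. -/
def encFml : Fml → ℕ
  | .var n => Nat.pair 0 n
  | .imp A B => Nat.pair 1 (Nat.pair (encFml A) (encFml B))

/-- The fixed effective encoding of `{→}`-calculi (finite sets of formulas)
as natural numbers. -/
def encCalc (P : Finset Fml) : ℕ :=
  Encodable.encode ((P.image encFml).sort (· ≤ ·))


section Aux

open Fml

theorem subst_var' (A : Fml) : A.subst .var = A := by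
  induction A <;> simp [Fml.subst, *]

theorem subst_congr' {σ τ : ℕ → Fml} {A : Fml} (h : ∀ n ∈ A.fvars, σ n = τ n) :
    A.subst σ = A.subst τ := by
  induction A with
  | var n => exact h n (by simp [Fml.fvars])
  | imp A B ihA ihB =>
      simp only [Fml.subst]
      rw [ihA fun n hn => h n (by simp [Fml.fvars]; exact Or.inl hn),
          ihB fun n hn => h n (by simp [Fml.fvars]; exact Or.inr hn)]

theorem subst_fix' {σ : ℕ → Fml} {A : Fml} (h : ∀ n ∈ A.fvars, σ n = .var n) :
    A.subst σ = A := by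
  rw [subst_congr' h, subst_var']

theorem subst_subst' (σ τ : ℕ → Fml) (A : Fml) :
    (A.subst τ).subst σ = A.subst (fun n => (τ n).subst σ) := by
  induction A <;> simp [Fml.subst, *]

theorem mem_fvars_subst' {σ : ℕ → Fml} {A : Fml} {n : ℕ}
    (h : n ∈ (A.subst σ).fvars) : ∃ k ∈ A.fvars, n ∈ (σ k).fvars := by
  induction A with
  | var k => exact ⟨k, by simp [Fml.fvars], h⟩
  | imp A B ihA ihB =>
      simp only [Fml.subst, Fml.fvars, Finset.mem_union] at h
      rcases h with h | h
      · obtain ⟨k, hk, hn⟩ := ihA h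
        exact ⟨k, by simp [Fml.fvars]; exact Or.inl hk, hn⟩
      · obtain ⟨k, hk, hn⟩ := ihB h
        exact ⟨k, by simp [Fml.fvars]; exact Or.inr hk, hn⟩

variable {m : ℕ}

theorem hat_subst (xhat : Fml) (hx : xhat.fvars = {0}) (σ : ℕ → Fml) (B : Fml) :
    (hat xhat B).subst σ = hat xhat (B.subst σ) := by
  unfold hat
  rw [subst_subst']
  apply subst_congr'
  intro n hn
  rw [hx] at hn
  simp at hn
  subst hn
  simp

theorem fvars_hat (xhat : Fml) (hx : xhat.fvars = {0}) (B : Fml) :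
    (hat xhat B).fvars ⊆ B.fvars := by
  intro n hn
  obtain ⟨k, hk, hn⟩ := mem_fvars_subst' hn
  rw [hx] at hk
  simp at hk
  subst hk
  simpa using hn

theorem circ_subst (xhat : Fml) (hx : xhat.fvars = {0}) (σ : ℕ → Fml) (A B : Fml) :
    (circ xhat A B).subst σ = circ xhat (A.subst σ) (B.subst σ) := by
  simp [circ, Fml.subst, hat_subst xhat hx]

theorem dot_subst (xhat : Fml) (hx : xhat.fvars = {0}) (σ : ℕ → Fml) (A B : Fml) :
    (dot xhat A B).subst σ = dot xhat (A.subst σ) (B.subst σ) := by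
  rw [dot, circ_subst xhat hx]
  simp [dot, Fml.subst]

theorem fvars_circ (xhat : Fml) (hx : xhat.fvars = {0}) (A B : Fml) :
    (circ xhat A B).fvars ⊆ A.fvars ∪ B.fvars := by
  have hA : (hat xhat A).fvars ⊆ A.fvars ∪ B.fvars :=
    (fvars_hat xhat hx A).trans Finset.subset_union_left
  have hB : (hat xhat B).fvars ⊆ A.fvars ∪ B.fvars :=
    (fvars_hat xhat hx B).trans Finset.subset_union_right
  simp only [circ, Fml.fvars]
  exact Finset.union_subset
    (Finset.union_subset (Finset.union_subset hB hB) hB)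
    (Finset.union_subset hA (Finset.union_subset (Finset.union_subset hB hB) hB))

theorem fvars_dot (xhat : Fml) (hx : xhat.fvars = {0}) (A B : Fml) :
    (dot xhat A B).fvars ⊆ A.fvars ∪ B.fvars := by
  intro n hn
  have := fvars_circ xhat hx (.imp (.imp A A) A) B hn
  simpa [Fml.fvars] using this

theorem fvars_Cform (k : ℕ) : (Cform k).fvars = {0} := by
  induction k <;> simp [Cform, Fml.fvars, *]

theorem fvars_toFml (xhat : Fml) (hx : xhat.fvars = {0}) (t : ATree m) :
    (t.toFml xhat).fvars ⊆ {0} := by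
  induction t with
  | leaf a =>
      intro n hn
      have := fvars_circ xhat hx (Cform (a.val + 1)) (.var 0) hn
      simpa [fvars_Cform, Fml.fvars] using this
  | node l r ihl ihr =>
      intro n hn
      have := fvars_dot xhat hx (l.toFml xhat) (r.toFml xhat) hn
      rcases Finset.mem_union.1 this with h | h
      · exact ihl h
      · exact ihr h

theorem toFml_subst_fix (xhat : Fml) (hx : xhat.fvars = {0}) (t : ATree m)
    (σ : ℕ → Fml) (h0 : σ 0 = .var 0) :
    (t.toFml xhat).subst σ = t.toFml xhat := by
  apply subst_fix'
  intro n hn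
  have := fvars_toFml xhat hx t hn
  simp at this
  subst this
  exact h0

end Aux
section Aux2

open Fml

variable {m : ℕ}

theorem deriv_inst {P : Set Fml} {A : Fml} (hA : A ∈ P) (σ : ℕ → Fml) :
    Fml.Deriv P (A.subst σ) := Fml.Deriv.sub σ (Fml.Deriv.ax hA)

theorem deriv_R1 (xhat : Fml) (hx : xhat.fvars = {0}) (T : TagSystem m) (X Y Z : Fml) :
    Fml.Deriv (PT xhat T) (.imp (dot xhat X (dot xhat Y Z)) (dot xhat (dot xhat X Y) Z)) := by
  have hmem : Fml.imp (dot xhat Xv (dot xhat Yv Zv)) (dot xhat (dot xhat Xv Yv) Zv)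
      ∈ PT xhat T := Set.mem_union_right _ (Set.mem_insert _ _)
  have := deriv_inst hmem
    (fun n => if n = 1 then X else if n = 2 then Y else if n = 3 then Z else .var n)
  simpa [dot, circ, hat_subst xhat hx, Fml.subst, Xv, Yv, Zv] using this

theorem deriv_R2 (xhat : Fml) (hx : xhat.fvars = {0}) (T : TagSystem m) (X Y Z : Fml) :
    Fml.Deriv (PT xhat T) (.imp (dot xhat (dot xhat X Y) Z) (dot xhat X (dot xhat Y Z))) := by
  have hmem : Fml.imp (dot xhat (dot xhat Xv Yv) Zv) (dot xhat Xv (dot xhat Yv Zv))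
      ∈ PT xhat T :=
    Set.mem_union_right _ (Set.mem_insert_of_mem _ (Set.mem_insert _ _))
  have := deriv_inst hmem
    (fun n => if n = 1 then X else if n = 2 then Y else if n = 3 then Z else .var n)
  simpa [dot, circ, hat_subst xhat hx, Fml.subst, Xv, Yv, Zv] using this

theorem deriv_R3 (xhat : Fml) (hx : xhat.fvars = {0}) (T : TagSystem m) (X Y Z U : Fml) :
    Fml.Deriv (PT xhat T) (.imp (dot xhat (dot xhat X (dot xhat Y Z)) U)
      (dot xhat (dot xhat (dot xhat X Y) Z) U)) := by
  have hmem : Fml.imp (dot xhat (dot xhat Xv (dot xhat Yv Zv)) Uv)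
      (dot xhat (dot xhat (dot xhat Xv Yv) Zv) Uv) ∈ PT xhat T :=
    Set.mem_union_right _ (Set.mem_insert_of_mem _ (Set.mem_insert_of_mem _
      (Set.mem_insert _ _)))
  have := deriv_inst hmem
    (fun n => if n = 1 then X else if n = 2 then Y else if n = 3 then Z
      else if n = 4 then U else .var n)
  simpa [dot, circ, hat_subst xhat hx, Fml.subst, Xv, Yv, Zv, Uv] using this

theorem deriv_R4 (xhat : Fml) (hx : xhat.fvars = {0}) (T : TagSystem m) (X Y Z U : Fml) :
    Fml.Deriv (PT xhat T) (.imp (dot xhat (dot xhat (dot xhat X Y) Z) U)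
      (dot xhat (dot xhat X (dot xhat Y Z)) U)) := by
  have hmem : Fml.imp (dot xhat (dot xhat (dot xhat Xv Yv) Zv) Uv)
      (dot xhat (dot xhat Xv (dot xhat Yv Zv)) Uv) ∈ PT xhat T :=
    Set.mem_union_right _ (Set.mem_insert_of_mem _ (Set.mem_insert_of_mem _
      (Set.mem_insert_of_mem _ rfl)))
  have := deriv_inst hmem
    (fun n => if n = 1 then X else if n = 2 then Y else if n = 3 then Z
      else if n = 4 then U else .var n)
  simpa [dot, circ, hat_subst xhat hx, Fml.subst, Xv, Yv, Zv, Uv] using this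

end Aux2
section Aux3

open Fml

variable {m : ℕ}

/-- Two-way derivable chain between the formulas of two trees. -/
def EqT (xhat : Fml) (T : TagSystem m) (t s : ATree m) : Prop :=
  DChain (PT xhat T) (t.toFml xhat) (s.toFml xhat) ∧
    DChain (PT xhat T) (s.toFml xhat) (t.toFml xhat)

theorem EqT.rfl' {xhat : Fml} {T : TagSystem m} {t : ATree m} : EqT xhat T t t :=
  ⟨Relation.ReflTransGen.refl, Relation.ReflTransGen.refl⟩

theorem EqT.symm' {xhat : Fml} {T : TagSystem m} {t s : ATree m} (h : EqT xhat T t s) :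
    EqT xhat T s t := ⟨h.2, h.1⟩

theorem EqT.trans' {xhat : Fml} {T : TagSystem m} {t s r : ATree m}
    (h1 : EqT xhat T t s) (h2 : EqT xhat T s r) : EqT xhat T t r :=
  ⟨h1.1.trans h2.1, h2.2.trans h1.2⟩

theorem eq_assoc (xhat : Fml) (hx : xhat.fvars = {0}) (T : TagSystem m)
    (x y z : ATree m) :
    EqT xhat T (.node x (.node y z)) (.node (.node x y) z) :=
  ⟨Relation.ReflTransGen.single
      (deriv_R1 xhat hx T (x.toFml xhat) (y.toFml xhat) (z.toFml xhat)),
   Relation.ReflTransGen.single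
      (deriv_R2 xhat hx T (x.toFml xhat) (y.toFml xhat) (z.toFml xhat))⟩

theorem eq_assocL (xhat : Fml) (hx : xhat.fvars = {0}) (T : TagSystem m)
    (x y z u : ATree m) :
    EqT xhat T (.node (.node x (.node y z)) u) (.node (.node (.node x y) z) u) :=
  ⟨Relation.ReflTransGen.single
      (deriv_R3 xhat hx T (x.toFml xhat) (y.toFml xhat) (z.toFml xhat) (u.toFml xhat)),
   Relation.ReflTransGen.single
      (deriv_R4 xhat hx T (x.toFml xhat) (y.toFml xhat) (z.toFml xhat) (u.toFml xhat))⟩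

/-- Right comb over a list attached to a final tree. -/
def rcl : List (Fin m) → ATree m → ATree m
  | [], ρ => ρ
  | a :: l, ρ => .node (.leaf a) (rcl l ρ)

theorem rcl_append (l1 l2 : List (Fin m)) (ρ : ATree m) :
    rcl (l1 ++ l2) ρ = rcl l1 (rcl l2 ρ) := by
  induction l1 with
  | nil => rfl
  | cons a l ih => simp [rcl, ih]

theorem rcl_word (l : List (Fin m)) (ρ : ATree m) :
    (rcl l ρ).word = l ++ ρ.word := by
  induction l with
  | nil => rfl
  | cons a l ih => simp [rcl, ATree.word, ih]

/-- Number of leaves of a tree. -/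
def tsize : ATree m → ℕ
  | .leaf _ => 1
  | .node l r => tsize l + tsize r

theorem tsize_pos (t : ATree m) : 1 ≤ tsize t := by
  induction t with
  | leaf a => exact le_refl 1
  | node l r ihl ihr => simp [tsize]; omega

theorem toCombAux (xhat : Fml) (hx : xhat.fvars = {0}) (T : TagSystem m) {N : ℕ}
    (ihN : ∀ s ρ : ATree m, tsize s ≤ N → EqT xhat T (.node s ρ) (rcl s.word ρ)) :
    ∀ (y x ρ : ATree m), tsize x + tsize y ≤ N + 1 →
      EqT xhat T (.node (.node x y) ρ) (rcl (x.word ++ y.word) ρ) := by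
  intro y
  induction y with
  | leaf b =>
      intro x ρ h
      have h1 : EqT xhat T (.node (.node x (.leaf b)) ρ) (.node x (.node (.leaf b) ρ)) :=
        (eq_assoc xhat hx T x (.leaf b) ρ).symm'
      have hxN : tsize x ≤ N := by simp [tsize] at h; omega
      have h2 := ihN x (.node (.leaf b) ρ) hxN
      have h3 : rcl x.word (ATree.node (.leaf b) ρ) = rcl (x.word ++ [b]) ρ := by
        rw [rcl_append]; rfl
      rw [h3] at h2
      exact h1.trans' h2
  | node y1 y2 ih1 ih2 =>
      intro x ρ h
      have h1 := eq_assocL xhat hx T x y1 y2 ρ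
      have h2 := ih2 (.node x y1) ρ (by simp [tsize] at h ⊢; omega)
      have h3 : (ATree.node x y1).word ++ y2.word = x.word ++ (ATree.node y1 y2).word := by
        simp [ATree.word]
      rw [h3] at h2
      exact h1.trans' h2

theorem toComb (xhat : Fml) (hx : xhat.fvars = {0}) (T : TagSystem m) :
    ∀ (N : ℕ) (s ρ : ATree m), tsize s ≤ N → EqT xhat T (.node s ρ) (rcl s.word ρ) := by
  intro N
  induction N with
  | zero => intro s ρ h; exact absurd h (by have := tsize_pos s; omega)
  | succ N ih =>
      intro s ρ h
      cases s with
      | leaf a => exact EqT.rfl'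
      | node x y =>
          exact toCombAux xhat hx T ih y x ρ (by simpa [tsize] using h)

/-- Flatten the right spine into the left subtree. -/
def grow : ATree m → ATree m → ATree m × Fin m
  | l, .leaf a => (l, a)
  | l, .node r1 r2 => grow (.node l r1) r2

theorem grow_word : ∀ (r l : ATree m),
    (grow l r).1.word ++ [(grow l r).2] = l.word ++ r.word := by
  intro r
  induction r with
  | leaf a => intro l; rfl
  | node r1 r2 ih1 ih2 =>
      intro l
      show (grow (.node l r1) r2).1.word ++ [(grow (.node l r1) r2).2] = _
      rw [ih2 (.node l r1)]
      simp [ATree.word]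

theorem grow_eq (xhat : Fml) (hx : xhat.fvars = {0}) (T : TagSystem m) :
    ∀ (r l : ATree m), EqT xhat T (.node l r) (.node (grow l r).1 (.leaf (grow l r).2)) := by
  intro r
  induction r with
  | leaf a => intro l; exact EqT.rfl'
  | node r1 r2 ih1 ih2 =>
      intro l
      exact (eq_assoc xhat hx T l r1 r2).trans' (ih2 (.node l r1))

theorem word_ne_nil (t : ATree m) : t.word ≠ [] := by
  induction t with
  | leaf a => simp [ATree.word]
  | node l r ihl ihr => simp [ATree.word, ihl]

theorem to_norm (xhat : Fml) (hx : xhat.fvars = {0}) (T : TagSystem m) :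
    ∀ (t : ATree m) (l : List (Fin m)) (a : Fin m), t.word = l ++ [a] →
      EqT xhat T t (rcl l (.leaf a)) := by
  intro t l a h
  cases t with
  | leaf b =>
      have : ([b] : List (Fin m)) = l ++ [a] := h
      cases l with
      | nil =>
          simp at this
          subst this
          exact EqT.rfl'
      | cons c l' => simp at this
  | node x r =>
      have h1 := grow_eq xhat hx T r x
      have h2 := toComb xhat hx T (tsize (grow x r).1) (grow x r).1 (.leaf (grow x r).2)
        le_rfl
      have hw : (grow x r).1.word ++ [(grow x r).2] = l ++ [a] := by
        rw [grow_word r x]; exact h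
      have hinj := List.append_inj' hw rfl
      obtain ⟨hl, ha⟩ := hinj
      have ha' : (grow x r).2 = a := by simpa using ha
      rw [hl, ha'] at h2
      rw [ha'] at h1
      exact h1.trans' h2

theorem eq_of_word_eq (xhat : Fml) (hx : xhat.fvars = {0}) (T : TagSystem m)
    (t t' : ATree m) (h : t.word = t'.word) : EqT xhat T t t' := by
  rcases List.eq_nil_or_concat t.word with hnil | ⟨l, a, hla⟩
  · exact absurd hnil (word_ne_nil t)
  · rw [List.concat_eq_append] at hla
    have h1 := to_norm xhat hx T t l a hla
    have h2 := to_norm xhat hx T t' l a (by rw [← h]; exact hla)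
    exact h1.trans' h2.symm'

end Aux3
section Aux4

open Fml

variable {m : ℕ}

/-- The canonical right-comb tree with word `a :: l`. -/
def bld : Fin m → List (Fin m) → ATree m
  | a, [] => .leaf a
  | a, b :: l => .node (.leaf a) (bld b l)

theorem bld_word : ∀ (l : List (Fin m)) (a : Fin m), (bld a l).word = a :: l := by
  intro l
  induction l with
  | nil => intro a; rfl
  | cons b l ih => intro a; simp [bld, ATree.word, ih]

theorem deriv_T1 (xhat : Fml) (hx : xhat.fvars = {0}) (T : TagSystem m)
    {i : Fin m} {α : List (Fin m)} (hα : α.length = T.d - 1)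
    (tA tB : ATree m) (hA : tA.word = i :: α) (hB : tB.word = T.W i) (U : Fml) :
    Fml.Deriv (PT xhat T)
      (.imp (dot xhat (tA.toFml xhat) U) (dot xhat U (tB.toFml xhat))) := by
  have hmem : Fml.imp (dot xhat (tA.toFml xhat) Xv) (dot xhat Xv (tB.toFml xhat))
      ∈ PT xhat T :=
    Set.mem_union_left _ ⟨i, α, _, _, hα, ⟨tA, hA, rfl⟩, ⟨tB, hB, rfl⟩, Or.inl rfl⟩
  have hd := deriv_inst hmem (fun n => if n = 1 then U else .var n)
  have e : (Fml.imp (dot xhat (tA.toFml xhat) Xv) (dot xhat Xv (tB.toFml xhat))).subst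
        (fun n => if n = 1 then U else .var n)
      = .imp (dot xhat (tA.toFml xhat) U) (dot xhat U (tB.toFml xhat)) := by
    show Fml.imp ((dot xhat (tA.toFml xhat) Xv).subst _) ((dot xhat Xv (tB.toFml xhat)).subst _) = _
    rw [dot_subst xhat hx, dot_subst xhat hx,
      toFml_subst_fix xhat hx tA _ (by simp),
      toFml_subst_fix xhat hx tB _ (by simp)]
    rfl
  rw [e] at hd
  exact hd

theorem step_chain (xhat : Fml) (hx : xhat.fvars = {0}) (T : TagSystem m)
    (hW : ∀ i, T.W i ≠ []) {ξ ζ : List (Fin m)} (hst : TagStep T ξ ζ) :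
    ∀ A ∈ codeSet xhat ξ, ∀ B ∈ codeSet xhat ζ, DChain (PT xhat T) A B := by
  obtain ⟨i, β, γ, hβ, hξ, hζ⟩ := hst
  intro A hA B hB
  obtain ⟨t, ht, rfl⟩ := hA
  obtain ⟨s, hs, rfl⟩ := hB
  cases γ with
  | nil =>
      have hmem : Fml.imp (t.toFml xhat) (s.toFml xhat) ∈ PT xhat T :=
        Set.mem_union_left _ ⟨i, β, _, _, hβ,
          ⟨t, by rw [ht, hξ]; simp, rfl⟩,
          ⟨s, by rw [hs, hζ]; simp, rfl⟩, Or.inr rfl⟩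
      exact Relation.ReflTransGen.single (Fml.Deriv.ax hmem)
  | cons g γ' =>
      obtain ⟨w0, wl, hw⟩ : ∃ w0 wl, T.W i = w0 :: wl := by
        cases hWi : T.W i with
        | nil => exact absurd hWi (hW i)
        | cons a b => exact ⟨a, b, rfl⟩
      have h1 : EqT xhat T t (.node (bld i β) (bld g γ')) :=
        eq_of_word_eq xhat hx T _ _ (by rw [ht, hξ]; simp [ATree.word, bld_word])
      have hd : Fml.Deriv (PT xhat T)
          (.imp ((ATree.node (bld i β) (bld g γ')).toFml xhat)
            ((ATree.node (bld g γ') (bld w0 wl)).toFml xhat)) :=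
        deriv_T1 xhat hx T hβ (bld i β) (bld w0 wl) (bld_word β i)
          (by rw [bld_word, hw]) ((bld g γ').toFml xhat)
      have h3 : EqT xhat T (.node (bld g γ') (bld w0 wl)) s :=
        eq_of_word_eq xhat hx T _ _
          (by rw [hs, hζ, hw]; simp [ATree.word, bld_word])
      exact h1.1.trans ((Relation.ReflTransGen.single hd).trans h3.1)

end Aux4
/-- If `ξ ⟾_T ζ` (a finite, possibly empty, sequence of one-step
productions of `T`), then for all `A ∈ ͞ξ` and `B ∈ ͞ζ` one has `P_T ⊢ A ⇒ B`. -/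
theorem PT_chain_of_prod (xhat : Fml) (hx : xhat.fvars = {0})
    (m : ℕ) (T : TagSystem m) (hW : ∀ i, T.W i ≠ [])
    (ξ ζ : List (Fin m)) (hprod : TagProd T ξ ζ)
    (A B : Fml) (hA : A ∈ codeSet xhat ξ) (hB : B ∈ codeSet xhat ζ) :
    DChain (PT xhat T) A B := by
  induction hprod generalizing B with
  | refl =>
      obtain ⟨t, ht, rfl⟩ := hA
      obtain ⟨s, hs, rfl⟩ := hB
      exact (eq_of_word_eq xhat hx T t s (by rw [ht, hs])).1
  | @tail b c hab hbc ih =>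
      obtain ⟨i, β, γ, hβ, hb, hc⟩ := hbc
      have hmid : (bld i (β ++ γ)).toFml xhat ∈ codeSet xhat b :=
        ⟨bld i (β ++ γ), by rw [bld_word, hb], rfl⟩
      exact (ih _ hmid).trans
        (step_chain xhat hx T hW ⟨i, β, γ, hβ, hb, hc⟩ _ hmid _ hB)

end PC
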